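/- arXiv:1506.06653 — 8 statements merged into one kernel-verified Lean document; each statement's English description precedes it below -/
import Mathlib

section
/- For any binary string s of length L with periodic boundary conditions, the string R184(s) defined by [R184(s)]_i = s_{i-1} + s_i·s_{i+1} − s_{i-1}·s_i has the same sum of entries as s, i.e., rule 184 is number-conserving. -/
/-!
Rule 184 is a continuity equation: a particle at `i` hops to `i + 1` exactly when that site is
empty, so with the flux `s i * (1 - s (i + 1))` across the bond `(i, i + 1)`, the new occupation
of `i` is the old one plus the inflow from the left minus the outflow to the right. Summed around
the cycle, the inflows and outflows cancel.
-/

/-- Rule 184 on a cyclic binary string, algebraic form. -/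
def R184 {L : ℕ} (s : ZMod L → ℤ) (i : ZMod L) : ℤ :=
  s (i - 1) + s i * s (i + 1) - s (i - 1) * s i

lemma R184_eq_add_flux_sub_flux {L : ℕ} (s : ZMod L → ℤ) (i : ZMod L) :
    R184 s i = s i + s (i - 1) * (1 - s (i - 1 + 1)) - s i * (1 - s (i + 1)) := by
  rw [R184, sub_add_cancel]
  ring

theorem rule184_number_conserving_general (L : ℕ) [NeZero L] (s : ZMod L → ℤ) :
    ∑ i : ZMod L, R184 s i = ∑ i : ZMod L, s i := by
  set flux : ZMod L → ℤ := fun j => s j * (1 - s (j + 1))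
  have flux_shift : ∑ i : ZMod L, flux (i - 1) = ∑ i : ZMod L, flux i :=
    (Equiv.subRight 1).sum_comp flux
  simp only [R184_eq_add_flux_sub_flux s, Finset.sum_sub_distrib, Finset.sum_add_distrib]
  change ∑ i, s i + ∑ i, flux (i - 1) - ∑ i, flux i = _
  rw [flux_shift, add_sub_cancel_right]

/-- Rule 184 is number-conserving. -/
theorem rule184_number_conserving (L : ℕ) [NeZero L] (s : ZMod L → ℤ)
    (hs : ∀ i, s i = 0 ∨ s i = 1) :
    ∑ i : ZMod L, R184 s i = ∑ i : ZMod L, s i :=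
  rule184_number_conserving_general L s
end

section
/- Rule 184 on a cycle eventually eliminates all 00 pairs if density exceeds 1/2: if s is a cyclic binary string of length L with more ones than zeros, then after at most ⌊(L−2)/2⌋ iterations of R184 the resulting string contains no adjacent pair 00. -/
namespace Rule184

open Finset

variable {L : ℕ} {s : ZMod L → ℤ}

theorem R184_eq_zero_or_eq_one (hs : ∀ i, s i = 0 ∨ s i = 1) (i : ZMod L) :
    R184 s i = 0 ∨ R184 s i = 1 := by
  rcases hs (i - 1) with h | h <;> rcases hs i with h' | h' <;>
    rcases hs (i + 1) with h'' | h'' <;> simp [R184, h, h', h'']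

theorem iterate_R184_eq_zero_or_eq_one (hs : ∀ i, s i = 0 ∨ s i = 1) (t : ℕ) (i : ZMod L) :
    (R184^[t] s) i = 0 ∨ (R184^[t] s) i = 1 := by
  induction t generalizing i with
  | zero => exact hs i
  | succ t ih => rw [Function.iterate_succ_apply']; exact R184_eq_zero_or_eq_one ih i

def height (s : ZMod L → ℤ) (n : ℕ) : ℤ :=
  ∑ k ∈ range n, (1 - 2 * s k)

theorem height_succ (s : ZMod L → ℤ) (n : ℕ) :
    height s (n + 1) = height s n + (1 - 2 * s n) := by
  simp only [height, sum_range_succ]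

theorem abs_height_add_sub_le (hs : ∀ i, s i = 0 ∨ s i = 1) (n d : ℕ) :
    |height s (n + d) - height s n| ≤ d := by
  induction d with
  | zero => simp
  | succ d ih =>
    rw [← add_assoc, height_succ, abs_le]
    rw [abs_le] at ih
    rcases hs ((n + d : ℕ) : ZMod L) with h | h <;> rw [h] <;> push_cast <;> constructor <;>
      linarith [ih.1, ih.2]

theorem abs_height_sub_le (hs : ∀ i, s i = 0 ∨ s i = 1) (a b : ℕ) :
    |height s a - height s b| ≤ |(a : ℤ) - b| := by
  wlog hab : b ≤ a generalizing a b
  · rw [abs_sub_comm, abs_sub_comm (a : ℤ)]; exact this b a (by omega)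
  obtain ⟨d, rfl⟩ := Nat.exists_eq_add_of_le hab
  simpa using abs_height_add_sub_le hs b d

theorem sum_range_natCast [NeZero L] {M : Type*} [AddCommMonoid M] (f : ZMod L → M) :
    ∑ k ∈ range L, f k = ∑ i, f i :=
  sum_nbij' (fun k ↦ (k : ZMod L)) ZMod.val (by simp) (by simp [ZMod.val_lt])
    (fun k hk ↦ ZMod.val_natCast_of_lt (mem_range.mp hk)) (by simp) (fun _ _ ↦ rfl)

theorem height_add_period [NeZero L] (s : ZMod L → ℤ) (n : ℕ) :
    height s (n + L) = height s n + (L - 2 * ∑ i, s i) := by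
  induction n with
  | zero =>
    simp [height, sum_range_natCast (fun i ↦ 1 - 2 * s i), sum_sub_distrib, mul_sum]
  | succ n ih =>
    rw [add_right_comm, height_succ, ih, height_succ]
    simp only [Nat.cast_add, ZMod.natCast_self, add_zero]
    ring

/-- `windowMin u t m` is the minimum of `u` over `m, m + 2, …, m + 2t`. -/
def windowMin (u : ℕ → ℤ) : ℕ → ℕ → ℤ
  | 0, m => u m
  | t + 1, m => min (windowMin u t m) (windowMin u t (m + 2))

theorem windowMin_le (u : ℕ → ℤ) {t k : ℕ} (hk : k ≤ t) (m : ℕ) :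
    windowMin u t m ≤ u (m + 2 * k) := by
  induction t generalizing m k with
  | zero => simp [windowMin, Nat.le_zero.mp hk]
  | succ t ih =>
    rcases Nat.eq_zero_or_pos k with rfl | hk0
    · exact (min_le_left _ _).trans (ih (Nat.zero_le t) m)
    · have := ih (k := k - 1) (by omega) (m + 2)
      rw [show m + 2 + 2 * (k - 1) = m + 2 * k by omega] at this
      exact (min_le_right _ _).trans this

theorem exists_windowMin_eq (u : ℕ → ℤ) (t m : ℕ) :
    ∃ k ≤ t, windowMin u t m = u (m + 2 * k) := by
  induction t generalizing m with
  | zero => exact ⟨0, le_rfl, rfl⟩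
  | succ t ih =>
    rcases le_total (windowMin u t m) (windowMin u t (m + 2)) with h | h
    · obtain ⟨k, hk, hke⟩ := ih m
      exact ⟨k, by omega, by rw [windowMin, min_eq_left h, hke]⟩
    · obtain ⟨k, hk, hke⟩ := ih (m + 2)
      exact ⟨k + 1, by omega, by rw [windowMin, min_eq_right h, hke]; ring_nf⟩

/-- On the slopes `1 - 2a` of the height, one step of rule 184 is a min-plus operation. -/
theorem min_slope_eq {a b c : ℤ} (ha : a = 0 ∨ a = 1) (hb : b = 0 ∨ b = 1)
    (hc : c = 0 ∨ c = 1) (x : ℤ) :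
    min (x + (1 - 2 * a)) (x + (1 - 2 * a) + (1 - 2 * b) + (1 - 2 * c)) =
      min x (x + (1 - 2 * a) + (1 - 2 * b)) + (1 - 2 * (a + b * c - a * b)) := by
  rcases ha with rfl | rfl <;> rcases hb with rfl | rfl <;> rcases hc with rfl | rfl <;> omega

theorem windowMin_height_succ (hs : ∀ i, s i = 0 ∨ s i = 1) (t m : ℕ) :
    windowMin (height s) t (m + 1) =
      windowMin (height s) t m + (1 - 2 * (R184^[t] s) (m + t)) := by
  induction t generalizing m with
  | zero => simp [windowMin, height_succ]
  | succ t ih =>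
    have h1 := ih m
    have h2 := ih (m + 1)
    have h3 := ih (m + 2)
    simp only [windowMin, Function.iterate_succ_apply']
    rw [show m + 1 + 2 = m + 2 + 1 by ring, h3, show m + 2 = m + 1 + 1 by ring, h2, h1, R184]
    push_cast
    have hσ := iterate_R184_eq_zero_or_eq_one hs t
    rw [show (m : ZMod L) + (t + 1) - 1 = m + t by ring, show (m : ZMod L) + (t + 1) = m + t + 1 by ring,
      show (m : ZMod L) + 1 + t = m + t + 1 by ring, show (m : ZMod L) + 1 + 1 + t = m + t + 1 + 1 by ring]
    exact min_slope_eq (hσ _) (hσ _) (hσ _) _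

/-- The window minimum at `m` climbs by `2` from `m` to `m + 2`, so it is attained at `m` itself
and lies two below the whole window at `m + 2`. -/
theorem height_add_two_le_of_adjacent_zeros (hs : ∀ i, s i = 0 ∨ s i = 1) {t m : ℕ}
    (h0 : (R184^[t] s) (m + t) = 0) (h1 : (R184^[t] s) (m + t + 1) = 0) :
    height s m + 2 ≤ height s (m + 2 * t + 2) := by
  have hA := windowMin_height_succ hs t m
  have hB := windowMin_height_succ hs t (m + 1)
  rw [h0] at hA
  rw [Nat.cast_succ, add_right_comm (m : ZMod L) 1, h1] at hB
  have hclimb : windowMin (height s) t (m + 2) = windowMin (height s) t m + 2 := by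
    rw [hB, hA]; ring
  have hmin : windowMin (height s) t m = height s m := by
    obtain ⟨k, hk, hke⟩ := exists_windowMin_eq (height s) t m
    rcases Nat.eq_zero_or_pos k with rfl | hk0
    · exact hke
    · have := windowMin_le (height s) (t := t) (k := k - 1) (by omega) (m + 2)
      rw [show m + 2 + 2 * (k - 1) = m + 2 * k by omega] at this
      omega
  have := windowMin_le (height s) (le_refl t) (m + 2)
  rw [show m + 2 + 2 * t = m + 2 * t + 2 by ring] at this
  omega

end Rule184

open Rule184 in
/-- If a cyclic string has more ones than zeros, after ⌊(L-2)/2⌋ iterations of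
rule 184 there is no adjacent 00 pair. -/
theorem rule184_eliminates_00 (L : ℕ) [NeZero L]
    (s : ZMod L → ℤ) (hs : ∀ i, s i = 0 ∨ s i = 1)
    (hρ : (L : ℤ) < 2 * ∑ i : ZMod L, s i) :
    ∀ i, ¬ ((R184^[(L - 2) / 2] s) i = 0 ∧ (R184^[(L - 2) / 2] s) (i + 1) = 0) := by
  rintro i ⟨h0, h1⟩
  set T := (L - 2) / 2 with hT
  set m := (i - T).val
  have hm : (m : ZMod L) + T = i := by simp [m]
  rw [← hm] at h0 h1
  have hclimb := height_add_two_le_of_adjacent_zeros hs h0 h1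
  have hperiod := height_add_period s m
  have hlip := abs_height_sub_le hs (m + 2 * T + 2) (m + L)
  have hdist : |((m + 2 * T + 2 : ℕ) : ℤ) - (m + L : ℕ)| ≤ 1 := by
    have := Nat.pos_of_neZero L
    rw [abs_le]; omega
  rw [abs_le] at hlip
  linarith [hlip.1, hdist]
end

section
/- Rule 184 on a cycle eventually eliminates all 11 pairs if density is below 1/2: if s is a cyclic binary string of length L with more zeros than ones, then after at most ⌊(L−2)/2⌋ iterations of R184 the resulting string contains no adjacent pair 11. -/
open Finset

namespace Rule184

variable {L : ℕ}

def IsBinary (u : ZMod L → ℤ) : Prop := ∀ i, u i = 0 ∨ u i = 1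

def HasOneOneAt (u : ZMod L → ℤ) (p : ZMod L) : Prop := u p = 1 ∧ u (p + 1) = 1

def flux (u : ZMod L → ℤ) (i : ZMod L) : ℤ := u (i - 1) * (1 - u i)

def windowSum (u : ZMod L → ℤ) (a : ZMod L) (m : ℕ) : ℤ := ∑ j ∈ range m, u (a + j)

lemma R184_eq_add_flux_sub_flux (u : ZMod L → ℤ) (i : ZMod L) :
    R184 u i = u i + flux u i - flux u (i + 1) := by
  simp only [R184, flux, add_sub_cancel_right]
  ring

lemma windowSum_R184 (u : ZMod L → ℤ) (a : ZMod L) (m : ℕ) :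
    windowSum (R184 u) a m = windowSum u a m + flux u a - flux u (a + m) := by
  have hstep (j : ℕ) : R184 u (a + j) = u (a + j) + (flux u (a + j) - flux u (a + ↑(j + 1))) := by
    rw [R184_eq_add_flux_sub_flux, Nat.cast_succ, ← add_assoc]
    ring
  simp only [windowSum, hstep, sum_add_distrib, sum_range_sub' (fun j : ℕ => flux u (a + j)),
    Nat.cast_zero, add_zero]
  ring

lemma windowSum_succ (u : ZMod L → ℤ) (a : ZMod L) (m : ℕ) :
    windowSum u a (m + 1) = windowSum u a m + u (a + m) :=
  sum_range_succ _ _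

lemma windowSum_succ' (u : ZMod L → ℤ) (a : ZMod L) (m : ℕ) :
    windowSum u a (m + 1) = u a + windowSum u (a + 1) m := by
  simp only [windowSum, sum_range_succ', Nat.cast_succ, Nat.cast_zero, add_zero, add_assoc,
    add_comm (1 : ZMod L)]
  ring

lemma windowSum_le_sum [NeZero L] {u : ZMod L → ℤ} (hu : ∀ i, 0 ≤ u i) (a : ZMod L) {m : ℕ}
    (hm : m ≤ L) : windowSum u a m ≤ ∑ i, u i := by
  have hinj : Set.InjOn (fun j : ℕ => a + (j : ZMod L)) (range m) := by
    intro x hx y hy hxy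
    have hcast : (x : ZMod L) = y := add_left_cancel hxy
    rwa [ZMod.natCast_eq_natCast_iff', Nat.mod_eq_of_lt (by simp at hx; omega),
      Nat.mod_eq_of_lt (by simp at hy; omega)] at hcast
  rw [windowSum, ← sum_image (f := u) hinj]
  exact sum_le_univ_sum_of_nonneg hu

lemma isBinary_R184 {u : ZMod L → ℤ} (hu : IsBinary u) : IsBinary (R184 u) := by
  intro i
  rcases hu (i - 1) with h₁ | h₁ <;> rcases hu i with h₂ | h₂ <;>
    rcases hu (i + 1) with h₃ | h₃ <;> simp [R184, h₁, h₂, h₃]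

namespace IsBinary

variable {u : ZMod L → ℤ}

lemma flux_le (hu : IsBinary u) (i : ZMod L) : flux u i ≤ u (i - 1) := by
  rcases hu (i - 1) with h₁ | h₁ <;> rcases hu i with h₂ | h₂ <;> simp [flux, h₁, h₂]

lemma hasOneOneAt_of_R184 (hu : IsBinary u) {p : ZMod L} (h : HasOneOneAt (R184 u) p) :
    HasOneOneAt u (p + 1) := by
  obtain ⟨h₁, h₂⟩ := h
  rw [R184] at h₁ h₂
  rw [HasOneOneAt, add_assoc, one_add_one_eq_two]
  rw [add_sub_cancel_right, add_assoc, one_add_one_eq_two] at h₂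
  rcases hu (p - 1) with a | a <;> rcases hu p with b | b <;> rcases hu (p + 1) with c | c <;>
    rcases hu (p + 2) with d | d <;> simp_all

lemma hasOneOneAt_of_iterate_R184 (hu : IsBinary u) {T : ℕ} {p : ZMod L}
    (h : HasOneOneAt (R184^[T] u) p) : HasOneOneAt u (p + T) := by
  induction T generalizing u with
  | zero => simpa using h
  | succ T ih =>
    rw [Function.iterate_succ_apply] at h
    have := hu.hasOneOneAt_of_R184 (ih (isBinary_R184 hu) h)
    rwa [Nat.cast_succ, ← add_assoc]

lemma le_windowSum_of_iterate_R184 (hu : IsBinary u) {T : ℕ} {p : ZMod L}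
    (h : HasOneOneAt (R184^[T] u) p) :
    (T : ℤ) + 2 ≤ windowSum u (p - T) (2 * T + 2) := by
  induction T generalizing u with
  | zero =>
    obtain ⟨h₁, h₂⟩ := h
    simp only [Function.iterate_zero_apply] at h₁ h₂
    simp [windowSum, sum_range_succ, h₁, h₂]
  | succ T ih =>
    obtain ⟨-, hright⟩ := hu.hasOneOneAt_of_iterate_R184 h
    rw [Function.iterate_succ_apply] at h
    have hR := ih (isBinary_R184 hu) h
    have hright' : u (p - T + ↑(2 * T + 2)) = 1 := by
      rw [← hright]; congr 1; push_cast; ring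
    have hout : flux u (p - T + ↑(2 * T + 2)) = 0 := by
      rw [flux, hright', sub_self, mul_zero]
    have hin := hu.flux_le (p - T)
    rw [windowSum_R184, hout] at hR
    have hstart : p - ↑(T + 1) + 1 = p - T := by push_cast; ring
    rw [show 2 * (T + 1) + 2 = 2 * T + 2 + 1 + 1 by ring, windowSum_succ', hstart,
      windowSum_succ, hright']
    rw [show p - T - 1 = p - ↑(T + 1) by push_cast; ring] at hin
    push_cast at hin ⊢
    linarith

end IsBinary

end Rule184

open Rule184 in
/-- If a cyclic string has more zeros than ones, after ⌊(L-2)/2⌋ iterations of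
rule 184 there is no adjacent 11 pair. -/
theorem rule184_eliminates_11 (L : ℕ) [NeZero L]
    (s : ZMod L → ℤ) (hs : ∀ i, s i = 0 ∨ s i = 1)
    (hρ : 2 * ∑ i : ZMod L, s i < (L : ℤ)) :
    ∀ i, ¬ ((R184^[(L - 2) / 2] s) i = 1 ∧ (R184^[(L - 2) / 2] s) (i + 1) = 1) := by
  intro i hpair
  set T := (L - 2) / 2 with hT
  have hnonneg (k : ZMod L) : 0 ≤ s k := by rcases hs k with h | h <;> simp [h]
  rcases Nat.lt_or_ge L 2 with hL | hL
  · rw [show T = 0 by omega, Function.iterate_zero_apply] at hpair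
    have hsingle := single_le_sum (fun k _ => hnonneg k) (mem_univ i)
    omega
  · have hwin := IsBinary.le_windowSum_of_iterate_R184 hs hpair
    have hfit := windowSum_le_sum hnonneg (i - T) (show 2 * T + 2 ≤ L by omega)
    omega
end

section
/- If a cyclic binary string s of length L contains no adjacent pair 11, then after at most ⌊(L−1)/2⌋ iterations of majority rule 232, the string becomes all zeros, provided s has strictly fewer ones than zeros. -/
/-!
When the ones are isolated, a cell is `1` after a step of rule 232 only if it was a `0` between two
`1`s. So `R232 s i ≤ s (i + 1)` pointwise: the number of ones never grows, and the ones stay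
isolated. If the number of ones does not drop, that inequality is an equality everywhere, which
forces `s (i + 1) = s (i - 1)`; then every pair of neighbours `s i + s (i + 1)` carries the same
number of ones, and with fewer ones than zeros that number is `0`. So the number of ones, at most
`⌊(L - 1) / 2⌋` at the start, drops at every step until the configuration is `0`.
-/

/-- Majority of three binary values. -/
def maj (a b c : ℤ) : ℤ := if 2 ≤ a + b + c then 1 else 0

/-- Rule 232 (majority rule) on a cyclic string. -/
def R232 {L : ℕ} (s : ZMod L → ℤ) (i : ZMod L) : ℤ :=
  maj (s (i - 1)) (s i) (s (i + 1))

theorem ZMod.apply_eq_apply_zero_of_forall_add_one {L : ℕ} [NeZero L] {α : Type*}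
    {f : ZMod L → α} (hf : ∀ i, f (i + 1) = f i) (i : ZMod L) : f i = f 0 := by
  rw [← ZMod.natCast_zmod_val i]
  induction i.val with
  | zero => rw [Nat.cast_zero]
  | succ n ih => rw [Nat.cast_succ, hf, ih]

theorem sum_comp_add_right {G M : Type*} [AddGroup G] [Fintype G] [AddCommMonoid M] (f : G → M)
    (c : G) : ∑ i, f (i + c) = ∑ i, f i :=
  Fintype.sum_equiv (Equiv.addRight c) _ _ fun _ => rfl

theorem sum_comp_sub_right {G M : Type*} [AddGroup G] [Fintype G] [AddCommMonoid M] (f : G → M)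
    (c : G) : ∑ i, f (i - c) = ∑ i, f i :=
  Fintype.sum_equiv (Equiv.subRight c) _ _ fun _ => rfl

variable {L : ℕ}

def IsolatedOnes (s : ZMod L → ℤ) : Prop :=
  (∀ i, s i = 0 ∨ s i = 1) ∧ ¬ ∃ i, s i = 1 ∧ s (i + 1) = 1

theorem R232_eq_zero_or_eq_one (s : ZMod L → ℤ) (i : ZMod L) : R232 s i = 0 ∨ R232 s i = 1 := by
  unfold R232 maj
  split_ifs <;> simp

namespace IsolatedOnes

variable {s : ZMod L → ℤ}

theorem nonneg (h : IsolatedOnes s) (i : ZMod L) : 0 ≤ s i := by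
  rcases h.1 i with hi | hi <;> simp [hi]

theorem neighbours_of_R232_eq_one (h : IsolatedOnes s) {i : ZMod L} (hi : R232 s i = 1) :
    s (i - 1) = 1 ∧ s i = 0 ∧ s (i + 1) = 1 := by
  have hleft : ¬ (s (i - 1) = 1 ∧ s i = 1) := fun hl => h.2 ⟨i - 1, by rwa [sub_add_cancel]⟩
  have hright : ¬ (s i = 1 ∧ s (i + 1) = 1) := fun hr => h.2 ⟨i, hr⟩
  unfold R232 maj at hi
  rcases h.1 (i - 1) with ha | ha <;> rcases h.1 i with hb | hb <;>
    rcases h.1 (i + 1) with hc | hc <;> simp_all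

theorem R232_le_sub_one (h : IsolatedOnes s) (i : ZMod L) : R232 s i ≤ s (i - 1) := by
  rcases R232_eq_zero_or_eq_one s i with hi | hi
  · exact hi ▸ h.nonneg _
  · exact (hi.trans (h.neighbours_of_R232_eq_one hi).1.symm).le

theorem R232_le_add_one (h : IsolatedOnes s) (i : ZMod L) : R232 s i ≤ s (i + 1) := by
  rcases R232_eq_zero_or_eq_one s i with hi | hi
  · exact hi ▸ h.nonneg _
  · exact (hi.trans (h.neighbours_of_R232_eq_one hi).2.2.symm).le

theorem map_R232 (h : IsolatedOnes s) : IsolatedOnes (R232 s) := by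
  refine ⟨R232_eq_zero_or_eq_one s, fun ⟨i, hi, hi'⟩ => ?_⟩
  have h1 := (h.neighbours_of_R232_eq_one hi).2.2
  have h0 := (h.neighbours_of_R232_eq_one hi').2.1
  rw [h1] at h0
  exact one_ne_zero h0

variable [NeZero L]

theorem eq_zero_of_sum_nonpos (h : IsolatedOnes s) (hsum : ∑ i, s i ≤ 0) : s = 0 :=
  funext fun i => (Finset.sum_eq_zero_iff_of_nonneg fun j _ => h.nonneg j).1
    (hsum.antisymm (Finset.sum_nonneg fun j _ => h.nonneg j)) i (Finset.mem_univ i)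

theorem sum_R232_le (h : IsolatedOnes s) : ∑ i, R232 s i ≤ ∑ i, s i :=
  (Finset.sum_le_sum fun i _ => h.R232_le_add_one i).trans_eq (sum_comp_add_right s 1)

theorem eq_zero_of_sum_R232_eq (h : IsolatedOnes s) (hρ : 2 * ∑ i, s i < (L : ℤ))
    (heq : ∑ i, R232 s i = ∑ i, s i) : s = 0 := by
  have hR : ∀ i, R232 s i = s (i + 1) := fun i =>
    (Finset.sum_eq_sum_iff_of_le fun i _ => h.R232_le_add_one i).1
      (heq.trans (sum_comp_add_right s 1).symm) i (Finset.mem_univ i)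
  have hperiodic : ∀ i, s (i + 1) = s (i - 1) := fun i =>
    (Finset.sum_eq_sum_iff_of_le fun i _ => hR i ▸ h.R232_le_sub_one i).1
      ((sum_comp_add_right s 1).trans (sum_comp_sub_right s 1).symm) i
      (Finset.mem_univ i)
  have hpair : ∀ i, s i + s (i + 1) = s 0 + s 1 := fun i =>
    (ZMod.apply_eq_apply_zero_of_forall_add_one (f := fun i => s i + s (i + 1)) (fun i => by
      rw [hperiodic (i + 1), add_sub_cancel_right, add_comm]) i).trans (by rw [zero_add])
  have hsum : 2 * ∑ i, s i = L * (s 0 + s 1) := by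
    calc 2 * ∑ i, s i = ∑ i, (s i + s (i + 1)) := by
          rw [Finset.sum_add_distrib, sum_comp_add_right s 1, two_mul]
      _ = L * (s 0 + s 1) := by simp [hpair, ZMod.card]
  have hL : (0 : ℤ) < L := by exact_mod_cast NeZero.pos L
  have hpair_nonpos : s 0 + s 1 ≤ 0 := by
    by_contra! hpos
    nlinarith
  exact h.eq_zero_of_sum_nonpos (by nlinarith)

theorem sum_R232_lt (h : IsolatedOnes s) (hρ : 2 * ∑ i, s i < (L : ℤ)) (hs : s ≠ 0) :
    ∑ i, R232 s i < ∑ i, s i :=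
  h.sum_R232_le.lt_of_ne fun heq => hs (h.eq_zero_of_sum_R232_eq hρ heq)

theorem iterate_eq_zero (n : ℕ) (h : IsolatedOnes s) (hρ : 2 * ∑ i, s i < (L : ℤ))
    (hn : ∑ i, s i ≤ n) : R232^[n] s = 0 := by
  induction n generalizing s with
  | zero => exact h.eq_zero_of_sum_nonpos (by exact_mod_cast hn)
  | succ n ih =>
    have hstep : ∑ i, R232 s i ≤ n := by
      by_cases hs : s = 0
      · subst hs
        have := h.sum_R232_le
        simp only [Pi.zero_apply, Finset.sum_const_zero] at this
        exact this.trans (Nat.cast_nonneg n)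
      · have := h.sum_R232_lt hρ hs
        push_cast at hn
        omega
    exact ih h.map_R232 (by linarith [h.sum_R232_le]) hstep

end IsolatedOnes

/-- Without 11 pairs and with fewer ones than zeros, ⌊(L-1)/2⌋ iterations of
rule 232 yield the all-zeros configuration. -/
theorem rule232_converges_to_zeros (L : ℕ) [NeZero L]
    (s : ZMod L → ℤ) (hs : ∀ i, s i = 0 ∨ s i = 1)
    (h11 : ¬ ∃ i, s i = 1 ∧ s (i + 1) = 1)
    (hρ : 2 * ∑ i : ZMod L, s i < (L : ℤ)) :
    R232^[(L - 1) / 2] s = fun _ => 0 :=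
  IsolatedOnes.iterate_eq_zero _ ⟨hs, h11⟩ hρ (by omega)
end

section
/- One-dimensional density classification (Fukś 1997): for a cyclic binary string s of length L with density ρ = (∑ s_i)/L, setting n = ⌊(L−2)/2⌋ and m = ⌊(L−1)/2⌋, the string R232^m(R184^n(s)) is all zeros if ρ < 1/2, all ones if ρ > 1/2, and alternating 0101… if ρ = 1/2. -/
open Finset

namespace DensityClassification

lemma sum_comp_le_univ_sum {ι α M : Type*} [Fintype α] [AddCommMonoid M] [Preorder M]
    [AddLeftMono M] {s : α → M} (hs : ∀ i, 0 ≤ s i) {S : Finset ι} {φ : ι → α}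
    (hφ : Set.InjOn φ S) : ∑ k ∈ S, s (φ k) ≤ ∑ i, s i := by
  classical
  rw [← sum_image hφ]
  exact sum_le_univ_sum_of_nonneg hs

variable {L : ℕ}

def IsBinary (s : ZMod L → ℤ) : Prop := ∀ i, s i = 0 ∨ s i = 1

lemma IsBinary.nonneg {s : ZMod L → ℤ} (hs : IsBinary s) (i : ZMod L) : 0 ≤ s i := by
  rcases hs i with h | h <;> simp [h]

lemma IsBinary.eq_one_and_eq_one {s : ZMod L → ℤ} (hs : IsBinary s) {i j : ZMod L}
    (h : ¬s i + s j ≤ 1) : s i = 1 ∧ s j = 1 := by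
  rcases hs i with h₁ | h₁ <;> rcases hs j with h₂ | h₂ <;> omega

lemma isBinary_R232 (s : ZMod L → ℤ) : IsBinary (R232 s) := by
  intro i
  unfold R232 maj
  split_ifs <;> simp

lemma isBinary_R184 {s : ZMod L → ℤ} (hs : IsBinary s) : IsBinary (R184 s) := by
  intro i
  unfold R184
  rcases hs (i - 1) with h₁ | h₁ <;> rcases hs i with h₂ | h₂ <;>
    rcases hs (i + 1) with h₃ | h₃ <;> simp [h₁, h₂, h₃]

lemma isBinary_R184_iterate {s : ZMod L → ℤ} (hs : IsBinary s) (t : ℕ) :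
    IsBinary (R184^[t] s) :=
  Function.Iterate.rec IsBinary hs (fun _ => isBinary_R184) t

/-- Exchanging `0`s and `1`s alone does not commute with rule 184 (particles move right, holes
left); combined with the reflection `i ↦ -i` it does. -/
def particleHole (s : ZMod L → ℤ) (i : ZMod L) : ℤ := 1 - s (-i)

lemma isBinary_particleHole {s : ZMod L → ℤ} (hs : IsBinary s) : IsBinary (particleHole s) := by
  intro i
  unfold particleHole
  rcases hs (-i) with h | h <;> simp [h]

lemma sum_particleHole [NeZero L] (s : ZMod L → ℤ) :
    ∑ i, particleHole s i = L - ∑ i, s i := by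
  simp only [particleHole, sum_sub_distrib, sum_const, card_univ, ZMod.card, nsmul_eq_mul, mul_one]
  exact congrArg _ (Equiv.sum_comp (Equiv.neg (ZMod L)) s)

lemma eq_one_of_particleHole_eq_zero {g : ZMod L → ℤ} (h : particleHole g = 0) : g = 1 := by
  funext i
  have := congrFun h (-i)
  simp only [particleHole, neg_neg, Pi.zero_apply] at this
  simp only [Pi.one_apply]
  linarith

lemma add_ge_one_of_particleHole {g : ZMod L → ℤ}
    (h : ∀ j, particleHole g j + particleHole g (j + 1) ≤ 1) (i : ZMod L) :
    1 ≤ g i + g (i + 1) := by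
  have := h (-(i + 1))
  simp only [particleHole, neg_neg, neg_add_rev, neg_add_cancel_comm] at this
  linarith

lemma R184_particleHole {s : ZMod L → ℤ} (hs : IsBinary s) :
    R184 (particleHole s) = particleHole (R184 s) := by
  funext i
  simp only [R184, particleHole, neg_sub', neg_add', sub_neg_eq_add]
  rcases hs (-i - 1) with h₁ | h₁ <;> rcases hs (-i) with h₂ | h₂ <;>
    rcases hs (-i + 1) with h₃ | h₃ <;> simp [h₁, h₂, h₃]

lemma R184_iterate_particleHole {s : ZMod L → ℤ} (hs : IsBinary s) (t : ℕ) :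
    R184^[t] (particleHole s) = particleHole (R184^[t] s) := by
  induction t generalizing s with
  | zero => rfl
  | succ t ih =>
    simp only [Function.iterate_succ_apply, R184_particleHole hs, ih (isBinary_R184 hs)]

lemma commute_R232_particleHole :
    Function.Commute (R232 (L := L)) particleHole := by
  intro s
  funext i
  simp only [R232, particleHole, maj, neg_sub', neg_add', sub_neg_eq_add]
  split_ifs <;> omega

/-- Number of particles (`1`s) crossing from `i` to `i + 1` in one step of rule 184. -/
def flux (s : ZMod L → ℤ) (i : ZMod L) : ℤ := s i - s i * s (i + 1)

lemma R184_eq_add_flux_sub_flux (s : ZMod L → ℤ) (i : ZMod L) :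
    R184 s i = s i + flux s (i - 1) - flux s i := by
  simp only [R184, flux, sub_add_cancel]
  ring

lemma flux_le {s : ZMod L → ℤ} (hs : IsBinary s) (i : ZMod L) : flux s i ≤ s i := by
  unfold flux
  rcases hs i with h | h <;> rcases hs (i + 1) with h' | h' <;> simp [h, h']

lemma sum_R184 [NeZero L] (s : ZMod L → ℤ) : ∑ i, R184 s i = ∑ i, s i := by
  simp only [R184_eq_add_flux_sub_flux, sum_sub_distrib, sum_add_distrib]
  have : ∑ i, flux s (i - 1) = ∑ i, flux s i :=
    Fintype.sum_equiv (Equiv.subRight 1) _ _ fun _ => rfl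
  rw [this, add_sub_cancel_right]

lemma sum_R184_iterate [NeZero L] (s : ZMod L → ℤ) (t : ℕ) :
    ∑ i, R184^[t] s i = ∑ i, s i := by
  induction t generalizing s with
  | zero => rfl
  | succ t ih => rw [Function.iterate_succ_apply, ih, sum_R184]

lemma sum_window_R184 (s : ZMod L → ℤ) (a : ZMod L) (N : ℕ) :
    ∑ k ∈ range N, R184 s (a + k) =
      ∑ k ∈ range N, s (a + k) + flux s (a - 1) - flux s (a + N - 1) := by
  simp only [R184_eq_add_flux_sub_flux, sum_sub_distrib, sum_add_distrib]
  rw [add_sub_assoc, ← sum_sub_distrib]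
  have := sum_range_sub' (fun k : ℕ => flux s (a + k - 1)) N
  simp only [Nat.cast_add, Nat.cast_one, Nat.cast_zero, add_zero, ← add_assoc,
    add_sub_cancel_right] at this
  rw [this]
  ring

lemma sum_window_succ_succ (s : ZMod L → ℤ) (a : ZMod L) (N : ℕ) :
    ∑ k ∈ range (N + 2), s (a - 1 + k) =
      s (a - 1) + ∑ k ∈ range N, s (a + k) + s (a + N) := by
  rw [sum_range_succ, sum_range_succ']
  push_cast
  simp only [add_zero, sub_add_add_cancel]
  ring

lemma injOn_add_natCast (a : ZMod L) {N : ℕ} (hN : N ≤ L) :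
    Set.InjOn (fun k : ℕ => a + k) (range N) := fun _ hx _ hy h =>
  CharP.natCast_injOn_Iio (ZMod L) L (Set.mem_Iio.2 <| (mem_range.1 hx).trans_le hN)
    (Set.mem_Iio.2 <| (mem_range.1 hy).trans_le hN) (add_left_cancel h)

lemma injOn_add_two_mul_natCast (a : ZMod L) {t : ℕ} (ht : 2 * t < L) :
    Set.InjOn (fun k : ℕ => a + 2 * k) (range (t + 1)) := by
  intro x hx y hy h
  have hx' : 2 * x < L := by have := mem_range.1 hx; omega
  have hy' : 2 * y < L := by have := mem_range.1 hy; omega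
  have : ((2 * x : ℕ) : ZMod L) = (2 * y : ℕ) := by push_cast; exact add_left_cancel h
  have := CharP.natCast_injOn_Iio (ZMod L) L hx' hy' this
  omega

lemma eq_one_of_R184_eq_one {s : ZMod L → ℤ} (hs : IsBinary s) {p : ZMod L}
    (h₁ : R184 s p = 1) (h₂ : R184 s (p + 1) = 1) : s (p + 1) = 1 ∧ s (p + 1 + 1) = 1 := by
  simp only [R184, add_sub_cancel_right] at h₁ h₂
  rcases hs (p - 1) with e₁ | e₁ <;> rcases hs p with e₂ | e₂ <;>
    rcases hs (p + 1) with e₃ | e₃ <;> rcases hs (p + 1 + 1) with e₄ | e₄ <;>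
    simp [e₁, e₂, e₃, e₄] at h₁ h₂ ⊢

lemma sum_window_ge_of_R184_iterate {s : ZMod L → ℤ} (hs : IsBinary s) (t : ℕ) {i : ZMod L}
    (h₁ : R184^[t] s i = 1) (h₂ : R184^[t] s (i + 1) = 1) :
    s (i + t) = 1 ∧ s (i + t + 1) = 1 ∧
      (t : ℤ) + 2 ≤ ∑ k ∈ range (2 * t + 2), s (i - t + k) := by
  induction t generalizing s with
  | zero =>
    simp only [Function.iterate_zero, id_eq] at h₁ h₂
    simp [h₁, h₂, sum_range_succ]
  | succ t ih =>
    rw [Function.iterate_succ_apply] at h₁ h₂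
    obtain ⟨hu₁, hu₂, hsum⟩ := ih (isBinary_R184 hs) h₁ h₂
    obtain ⟨hs₁, hs₂⟩ := eq_one_of_R184_eq_one hs hu₁ hu₂
    have hflow := sum_window_R184 s (i - t) (2 * t + 2)
    have hext := sum_window_succ_succ s (i - t) (2 * t + 2)
    have hout : flux s (i + t + 1) = 0 := by simp [flux, hs₁, hs₂]
    rw [show i - t + ↑(2 * t + 2) - 1 = i + t + 1 by push_cast; ring, hout] at hflow
    rw [show i - t + ↑(2 * t + 2) = i + t + 1 + 1 by push_cast; ring, hs₂] at hext
    have := flux_le hs (i - t - 1)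
    refine ⟨by push_cast; rwa [← add_assoc], by push_cast; rwa [← add_assoc], ?_⟩
    rw [show i - ↑(t + 1) = i - t - 1 by push_cast; ring,
      show 2 * (t + 1) + 2 = 2 * t + 2 + 2 by ring, hext]
    push_cast
    linarith

lemma R184_iterate_add_le_one [NeZero L] {s : ZMod L → ℤ} (hs : IsBinary s) {t : ℕ}
    (hL : 2 * t + 2 ≤ L) (hsum : ∑ i, s i ≤ t + 1) (i : ZMod L) :
    R184^[t] s i + R184^[t] s (i + 1) ≤ 1 := by
  by_contra h
  obtain ⟨h₁, h₂⟩ := (isBinary_R184_iterate hs t).eq_one_and_eq_one h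
  obtain ⟨-, -, hwin⟩ := sum_window_ge_of_R184_iterate hs t h₁ h₂
  have := sum_comp_le_univ_sum hs.nonneg (injOn_add_natCast (i - (t : ZMod L)) hL)
  omega

lemma isBinary_R232_iterate {g : ZMod L → ℤ} (hg : IsBinary g) (t : ℕ) :
    IsBinary (R232^[t] g) :=
  Function.Iterate.rec IsBinary hg (fun g _ => isBinary_R232 g) t

lemma neighbors_eq_one_of_R232_eq_one {g : ZMod L → ℤ} (hg : IsBinary g)
    (h11 : ∀ i, g i + g (i + 1) ≤ 1) {j : ZMod L} (h : R232 g j = 1) :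
    g (j - 1) = 1 ∧ g (j + 1) = 1 := by
  have hl := h11 (j - 1)
  rw [sub_add_cancel] at hl
  have hr := h11 j
  unfold R232 maj at h
  split_ifs at h with hmaj
  · rcases hg (j - 1) with h₁ | h₁ <;> rcases hg (j + 1) with h₂ | h₂ <;> omega
  · exact absurd h zero_ne_one

lemma R232_add_le_one {g : ZMod L → ℤ} (hg : IsBinary g) (h11 : ∀ i, g i + g (i + 1) ≤ 1)
    (i : ZMod L) : R232 g i + R232 g (i + 1) ≤ 1 := by
  by_contra h
  obtain ⟨h₁, h₂⟩ := (isBinary_R232 g).eq_one_and_eq_one h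
  have := (neighbors_eq_one_of_R232_eq_one hg h11 h₁).2
  have := (neighbors_eq_one_of_R232_eq_one hg h11 h₂).1
  rw [add_sub_cancel_right] at this
  linarith [h11 i]

lemma eq_one_of_R232_iterate_eq_one {g : ZMod L → ℤ} (hg : IsBinary g)
    (h11 : ∀ i, g i + g (i + 1) ≤ 1) (t : ℕ) {x : ZMod L} (h : R232^[t] g x = 1) {k : ℕ}
    (hk : k ≤ t) : g (x - t + 2 * k) = 1 := by
  induction t generalizing g k with
  | zero =>
    obtain rfl := Nat.le_zero.1 hk
    simpa using h
  | succ t ih =>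
    rw [Function.iterate_succ_apply] at h
    have ih := @ih _ (isBinary_R232 g) (R232_add_le_one hg h11) h
    rcases Nat.le_succ_iff.1 hk with hk | rfl
    · convert (neighbors_eq_one_of_R232_eq_one hg h11 (ih hk)).1 using 2
      push_cast
      ring
    · convert (neighbors_eq_one_of_R232_eq_one hg h11 (ih le_rfl)).2 using 2
      push_cast
      ring

lemma R232_iterate_eq_zero [NeZero L] {g : ZMod L → ℤ} (hg : IsBinary g)
    (h11 : ∀ i, g i + g (i + 1) ≤ 1) {t : ℕ} (hL : 2 * t < L) (hsum : ∑ i, g i ≤ t) :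
    R232^[t] g = 0 := by
  funext x
  refine (isBinary_R232_iterate hg t x).resolve_right fun h => ?_
  have hones : ∑ k ∈ range (t + 1), g (x - t + 2 * k) = t + 1 := by
    rw [sum_congr rfl fun k hk =>
      eq_one_of_R232_iterate_eq_one hg h11 t h (Nat.lt_succ_iff.1 (mem_range.1 hk))]
    simp
  have := sum_comp_le_univ_sum hg.nonneg (injOn_add_two_mul_natCast (x - (t : ZMod L)) hL)
  omega

lemma R232_add_eq_one {g : ZMod L → ℤ} (h : ∀ i, g i + g (i + 1) = 1) (i : ZMod L) :
    R232 g i + R232 g (i + 1) = 1 := by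
  have h₀ := h (i - 1)
  rw [sub_add_cancel] at h₀
  have h₁ := h i
  have h₂ := h (i + 1)
  simp only [R232, maj, add_sub_cancel_right]
  split_ifs <;> omega

lemma R232_iterate_add_eq_one {g : ZMod L → ℤ} (h : ∀ i, g i + g (i + 1) = 1) (t : ℕ) :
    ∀ i, R232^[t] g i + R232^[t] g (i + 1) = 1 :=
  Function.Iterate.rec (fun g : ZMod L → ℤ => ∀ i, g i + g (i + 1) = 1) h
    (fun _ => R232_add_eq_one) t

end DensityClassification

open DensityClassification

/-- Fukś 1997: rules 184 then 232 classify density on a cyclic string. -/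
theorem density_classification_1d (L : ℕ) [NeZero L] (hL : 2 ≤ L)
    (s : ZMod L → ℤ) (hs : ∀ i, s i = 0 ∨ s i = 1) :
    (2 * ∑ i : ZMod L, s i < (L : ℤ) →
      R232^[(L - 1) / 2] (R184^[(L - 2) / 2] s) = fun _ => 0) ∧
    ((L : ℤ) < 2 * ∑ i : ZMod L, s i →
      R232^[(L - 1) / 2] (R184^[(L - 2) / 2] s) = fun _ => 1) ∧
    (2 * ∑ i : ZMod L, s i = (L : ℤ) →
      ∀ i, R232^[(L - 1) / 2] (R184^[(L - 2) / 2] s) i ≠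
           R232^[(L - 1) / 2] (R184^[(L - 2) / 2] s) (i + 1)) := by
  have no_jam_of_le (s' : ZMod L → ℤ) (hs' : IsBinary s') (h : 2 * ∑ i, s' i ≤ L)
      (i : ZMod L) :
      R184^[(L - 2) / 2] s' i + R184^[(L - 2) / 2] s' (i + 1) ≤ 1 :=
    R184_iterate_add_le_one hs' (by omega) (by omega) i
  have vanish_of_lt (s' : ZMod L → ℤ) (hs' : IsBinary s') (h : 2 * ∑ i, s' i < L) :
      R232^[(L - 1) / 2] (R184^[(L - 2) / 2] s') = 0 :=
    R232_iterate_eq_zero (isBinary_R184_iterate hs' _) (no_jam_of_le s' hs' h.le) (by omega)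
      (by rw [sum_R184_iterate]; omega)
  have hsum := sum_particleHole s
  refine ⟨vanish_of_lt s hs, fun hgt => ?_, fun heq i => ?_⟩
  · have := vanish_of_lt _ (isBinary_particleHole hs) (by omega)
    rw [R184_iterate_particleHole hs, (commute_R232_particleHole.iterate_left _).eq] at this
    exact eq_one_of_particleHole_eq_zero this
  · have h11 := no_jam_of_le s hs heq.le
    have h00 := add_ge_one_of_particleHole <|
      R184_iterate_particleHole hs _ ▸ no_jam_of_le _ (isBinary_particleHole hs) (by omega)
    have := R232_iterate_add_eq_one (fun j => le_antisymm (h11 j) (h00 j)) ((L - 1) / 2) i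
    omega
end

section
/- The two-dimensional lane-changing rule F_X is number-conserving: for any L×L binary array s with periodic boundary conditions and any binary array X, the sum of entries of F_X(s) equals the sum of entries of s. -/
/-- The two-dimensional lane-changing rule F_X, algebraic form. -/
def FX {L : ℕ} (X s : ZMod L × ZMod L → ℤ) (p : ZMod L × ZMod L) : ℤ :=
  let i := p.1; let j := p.2
  s (i, j) + (1 - s (i, j)) * s (i, j - 1) * s (i + 1, j - 1) * X (i, j - 1)
    - s (i, j) * (1 - s (i, j + 1)) * s (i + 1, j) * X (i, j)

/-! A car that changes lanes leaves cell `p` and enters cell `p + (0, 1)`, so `F_X(s)` is `s` plus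
the inflow of cars minus their outflow; summed over the torus, the translated outflow cancels the
outflow itself. -/

theorem Fintype.sum_add_comp_sub_sub {G M : Type*} [AddGroup G] [Fintype G] [AddCommGroup M]
    (g f : G → M) (a : G) : ∑ p, (g p + f (p - a) - f p) = ∑ p, g p := by
  have translate : ∑ p, f (p - a) = ∑ p, f p := (Equiv.subRight a).sum_comp f
  rw [Finset.sum_sub_distrib, Finset.sum_add_distrib, translate, add_sub_cancel_right]

def laneChangeOutflow {L : ℕ} (X s : ZMod L × ZMod L → ℤ) (p : ZMod L × ZMod L) : ℤ :=
  s p * (1 - s (p + (0, 1))) * s (p + (1, 0)) * X p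

theorem FX_eq_add_outflow_sub_outflow {L : ℕ} (X s : ZMod L × ZMod L → ℤ) (p : ZMod L × ZMod L) :
    FX X s p = s p + laneChangeOutflow X s (p - (0, 1)) - laneChangeOutflow X s p := by
  obtain ⟨i, j⟩ := p
  simp only [FX, laneChangeOutflow, Prod.mk_add_mk, Prod.mk_sub_mk, add_zero, sub_zero,
    sub_add_cancel]
  ring

theorem FX_number_conserving_general (L : ℕ) [NeZero L]
    (s X : ZMod L × ZMod L → ℤ) :
    ∑ p : ZMod L × ZMod L, FX X s p = ∑ p : ZMod L × ZMod L, s p := by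
  simp only [FX_eq_add_outflow_sub_outflow]
  exact Fintype.sum_add_comp_sub_sub s (laneChangeOutflow X s) (0, 1)

/-- The lane-changing rule F_X is number-conserving. -/
theorem FX_number_conserving (L : ℕ) [NeZero L]
    (s X : ZMod L × ZMod L → ℤ)
    (hs : ∀ p, s p = 0 ∨ s p = 1) (hX : ∀ p, X p = 0 ∨ X p = 1) :
    ∑ p : ZMod L × ZMod L, FX X s p = ∑ p : ZMod L × ZMod L, s p :=
  FX_number_conserving_general L s X
end

section
/- The crowd-avoidance rule G_X is number-conserving: for any L×L binary array s with periodic boundary conditions and any binary array X, the sum of entries of G_X(s) equals the sum of entries of s. -/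
/-!
G_X only moves particles one step in the second coordinate: cases 1 and 3 at `(i, j)` have
exactly the same conditions as cases 2 and 4 at `(i, j - 1)`, so a cell gains a particle
precisely when the cell below it loses one. Hence `G_X(s) = s + (inflow) - (outflow)`
cell by cell, and the flux terms cancel when summed over the torus.
-/

/-- The two-dimensional crowd-avoidance rule G_X, defined by cases. -/
def GX {L : ℕ} (X s : ZMod L × ZMod L → ℤ) (p : ZMod L × ZMod L) : ℤ :=
  let i := p.1; let j := p.2
  if s (i, j) = 0 ∧ s (i - 1, j) = 0 ∧ s (i + 1, j) = 0 ∧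
      s (i, j - 1) = 1 ∧ X (i, j - 1) = 1 then 1
  else if s (i, j) = 1 ∧ s (i - 1, j + 1) = 0 ∧ s (i, j + 1) = 0 ∧
      s (i + 1, j + 1) = 0 ∧ X (i, j) = 1 then 0
  else if s (i, j) = 0 ∧ s (i - 1, j - 1) = 1 ∧ s (i, j - 1) = 1 ∧
      s (i + 1, j - 1) = 1 ∧ X (i, j - 1) = 1 then 1
  else if s (i, j) = 1 ∧ s (i, j + 1) = 0 ∧ s (i - 1, j) = 1 ∧
      s (i + 1, j) = 1 ∧ X (i, j) = 1 then 0
  else s (i, j)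

theorem Fintype.sum_add_sub_translate_sub {G M : Type*} [AddGroup G] [Fintype G]
    [AddCommGroup M] (s m : G → M) (v : G) :
    ∑ p, (s p + m (p - v) - m p) = ∑ p, s p := by
  have htranslate : ∑ p, m (p - v) = ∑ p, m p :=
    Fintype.sum_equiv (Equiv.subRight v) _ _ fun _ => rfl
  rw [Finset.sum_sub_distrib, Finset.sum_add_distrib, htranslate, add_sub_cancel_right]

/-- Indicator of case 2 or 4 at `p`, i.e. of the particle at `p` hopping to `(p.1, p.2 + 1)`. -/
def hopFlux {L : ℕ} (X s : ZMod L × ZMod L → ℤ) (p : ZMod L × ZMod L) : ℤ :=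
  if s (p.1, p.2) = 1 ∧ X (p.1, p.2) = 1 ∧ s (p.1, p.2 + 1) = 0 ∧
      ((s (p.1 - 1, p.2 + 1) = 0 ∧ s (p.1 + 1, p.2 + 1) = 0) ∨
        (s (p.1 - 1, p.2) = 1 ∧ s (p.1 + 1, p.2) = 1)) then 1 else 0

theorem GX_eq_add_hopFlux_sub_hopFlux {L : ℕ} (X s : ZMod L × ZMod L → ℤ) (i j : ZMod L) :
    GX X s (i, j) = s (i, j) + hopFlux X s (i, j - 1) - hopFlux X s (i, j) := by
  simp only [GX, hopFlux, sub_add_cancel]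
  grind

theorem GX_number_conserving_general (L : ℕ) [NeZero L]
    (s X : ZMod L × ZMod L → ℤ) :
    ∑ p : ZMod L × ZMod L, GX X s p = ∑ p : ZMod L × ZMod L, s p := by
  calc ∑ p, GX X s p
      = ∑ p, (s p + hopFlux X s (p - (0, 1)) - hopFlux X s p) :=
        Fintype.sum_congr _ _ fun ⟨i, j⟩ => by
          rw [GX_eq_add_hopFlux_sub_hopFlux, Prod.mk_sub_mk, sub_zero]
    _ = ∑ p, s p := Fintype.sum_add_sub_translate_sub s (hopFlux X s) (0, 1)

/-- The crowd-avoidance rule G_X is number-conserving. -/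
theorem GX_number_conserving (L : ℕ) [NeZero L]
    (s X : ZMod L × ZMod L → ℤ)
    (hs : ∀ p, s p = 0 ∨ s p = 1) (hX : ∀ p, X p = 0 ∨ X p = 1) :
    ∑ p : ZMod L × ZMod L, GX X s p = ∑ p : ZMod L × ZMod L, s p :=
  GX_number_conserving_general L s X
end

section
/- Rule 184 preserves the number of 01 'interfaces' or decreases the number of blocked cars: the number of indices i with s_i = 1 and s_{i+1} = 1 (blocked particles) is non-increasing under R184. -/
/-!
A car occupies site `i + 1` after one step either because it arrived from `i` (so `i + 1` was
empty and `i` was occupied) or because it was blocked at `i + 1`. In the first case site `i`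
has just been vacated, so no new pair can start at `i`. Hence every blocked pair at `i` after
the step comes from a blocked pair at `i + 1` before it, and `i ↦ i + 1` is an injection.
-/

section

variable {L : ℕ} {s : ZMod L → ℤ}

theorem R184_eq_one_iff (hs : ∀ i, s i = 0 ∨ s i = 1) (i : ZMod L) :
    R184 s i = 1 ↔ (s (i - 1) = 1 ∧ s i = 0) ∨ (s i = 1 ∧ s (i + 1) = 1) := by
  unfold R184
  rcases hs (i - 1) with ha | ha <;> rcases hs i with hb | hb <;>
    rcases hs (i + 1) with hc | hc <;> simp [ha, hb, hc]

theorem R184_eq_zero_of_vacated (i : ZMod L) (hi : s i = 1) (hi' : s (i + 1) = 0) :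
    R184 s i = 0 := by
  simp [R184, hi, hi']

theorem blocked_of_R184_blocked (hs : ∀ i, s i = 0 ∨ s i = 1) {i : ZMod L}
    (h : R184 s i = 1) (h' : R184 s (i + 1) = 1) : s (i + 1) = 1 ∧ s (i + 1 + 1) = 1 := by
  rw [R184_eq_one_iff hs, add_sub_cancel_right] at h'
  rcases h' with ⟨hi, hi'⟩ | blocked
  · simp [R184_eq_zero_of_vacated i hi hi'] at h
  · exact blocked

end

theorem rule184_blocked_nonincreasing_general (L : ℕ) [NeZero L]
    (s : ZMod L → ℤ) (hs : ∀ i, s i = 0 ∨ s i = 1) :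
    (Finset.univ.filter (fun i : ZMod L => R184 s i = 1 ∧ R184 s (i + 1) = 1)).card ≤
    (Finset.univ.filter (fun i : ZMod L => s i = 1 ∧ s (i + 1) = 1)).card := by
  refine Finset.card_le_card_of_injOn (· + 1) (fun i hi => ?_) (add_left_injective 1).injOn
  simp only [Finset.coe_filter, Finset.mem_univ, true_and, Set.mem_ofPred_eq] at hi ⊢
  exact blocked_of_R184_blocked hs hi.1 hi.2

/-- The number of blocked particles (adjacent 11 pairs) is non-increasing
under rule 184. -/
theorem rule184_blocked_nonincreasing (L : ℕ) [NeZero L] (hL : 3 ≤ L)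
    (s : ZMod L → ℤ) (hs : ∀ i, s i = 0 ∨ s i = 1) :
    (Finset.univ.filter (fun i : ZMod L => R184 s i = 1 ∧ R184 s (i + 1) = 1)).card ≤
    (Finset.univ.filter (fun i : ZMod L => s i = 1 ∧ s (i + 1) = 1)).card :=
  rule184_blocked_nonincreasing_general L s hs
end
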